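/- Let X be a T0 space that is I-stable and I-continuous. Then the I-convergence in X is topological: for every net (x_i) in X and every y ∈ X, the net (x_i) I-converges to y if and only if (x_i) converges to y with respect to the topology on X generated by σ_I (equivalently, for every U ∈ σ_I with y ∈ U, x_i ∈ U eventually). -/

import Mathlib

universe u

/-- The specialisation order of a topological space: `x ≤ y` iff `x ∈ closure {y}`. -/
def sle {X : Type u} [TopologicalSpace X] (x y : X) : Prop :=
  x ∈ closure ({y} : Set X)

/-- Upper bounds with respect to the specialisation order. -/
def sUB {X : Type u} [TopologicalSpace X] (A : Set X) : Set X :=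
  {u | ∀ a ∈ A, sle a u}

/-- `s` is the least upper bound of `A` with respect to the specialisation order. -/
def sIsLUB {X : Type u} [TopologicalSpace X] (A : Set X) (s : X) : Prop :=
  s ∈ sUB A ∧ ∀ u ∈ sUB A, sle s u

/-- `x ≪_I y`: for every irreducible set `E` having a supremum above `y`,
some element of `E` is above `x`. -/
def IBelow {X : Type u} [TopologicalSpace X] (x y : X) : Prop :=
  ∀ E : Set X, IsIrreducible E → ∀ s : X, sIsLUB E s → sle y s → ∃ e ∈ E, sle x e

/-- `X` is I-continuous: for every `y`, the set `↡_I y` is irreducible with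
least upper bound `y`. -/
def IContinuous (X : Type u) [TopologicalSpace X] : Prop :=
  ∀ y : X, IsIrreducible {x | IBelow x y} ∧ sIsLUB {x | IBelow x y} y

/-- `X` is I-stable: `↟_I U` is open for every open `U`. -/
def IStable (X : Type u) [TopologicalSpace X] : Prop :=
  ∀ U : Set X, IsOpen U → IsOpen {x : X | ∃ a ∈ U, IBelow a x}

/-- `X` is sup-sober: every closed irreducible set with a supremum is the closure
of that supremum. -/
def SupSober (X : Type u) [TopologicalSpace X] : Prop :=
  ∀ F : Set X, IsClosed F → IsIrreducible F → ∀ s : X, sIsLUB F s → F = closure ({s} : Set X)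

/-- The collection σ_I: upper sets (w.r.t. specialisation) inaccessible by suprema of
irreducible sets. -/
def sigmaI (X : Type u) [TopologicalSpace X] : Set (Set X) :=
  {U | (∀ a ∈ U, ∀ b : X, sle a b → b ∈ U) ∧
       ∀ E : Set X, IsIrreducible E → ∀ s : X, sIsLUB E s → s ∈ U → (U ∩ E).Nonempty}

/-- The irreducibly derived topology τ_SI: open sets inaccessible by suprema of
irreducible sets. -/
def tauSI (X : Type u) [TopologicalSpace X] : Set (Set X) :=
  {U | IsOpen U ∧ ∀ E : Set X, IsIrreducible E → ∀ s : X, sIsLUB E s → s ∈ U → (E ∩ U).Nonempty}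

/-- The net `x` I-converges to `y`: there is an irreducible set `E` with a supremum above `y`,
all of whose elements are eventual lower bounds of the net. -/
def IConv {X : Type u} [TopologicalSpace X] {ι : Type u} [Preorder ι]
    (x : ι → X) (y : X) : Prop :=
  ∃ E : Set X, IsIrreducible E ∧
    (∀ e ∈ E, ∃ i₀ : ι, ∀ i : ι, i₀ ≤ i → sle e (x i)) ∧
    ∃ s : X, sIsLUB E s ∧ sle y s

/-- `D` is directed with respect to the specialisation order. -/
def sDirectedOn {X : Type u} [TopologicalSpace X] (D : Set X) : Prop :=
  ∀ a ∈ D, ∀ b ∈ D, ∃ c ∈ D, sle a c ∧ sle b c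

/-- Way-below in the specialisation poset, via nonempty directed sets. -/
def sWayBelow {X : Type u} [TopologicalSpace X] (x y : X) : Prop :=
  ∀ D : Set X, D.Nonempty → sDirectedOn D → ∀ s : X, sIsLUB D s → sle y s → ∃ d ∈ D, sle x d

/-- `X` is a DI space: the supremum of any irreducible set is also attained as the supremum
of a nonempty directed subset of its lower closure. -/
def DISpace (X : Type u) [TopologicalSpace X] : Prop :=
  ∀ E : Set X, IsIrreducible E → ∀ s : X, sIsLUB E s →
    ∃ D : Set X, D.Nonempty ∧ sDirectedOn D ∧ (∀ d ∈ D, ∃ e ∈ E, sle d e) ∧ sIsLUB D s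

/-- `U` is τ_I-open: every net that I-converges to a point of `U` is eventually in `U`. -/
def TauIOpen {X : Type u} [TopologicalSpace X] (U : Set X) : Prop :=
  ∀ (ι : Type u) [Preorder ι] [Nonempty ι],
    (∀ i j : ι, ∃ k : ι, i ≤ k ∧ j ≤ k) →
    ∀ x : ι → X, ∀ y ∈ U, IConv x y →
    ∃ i₀ : ι, ∀ i : ι, i₀ ≤ i → x i ∈ U

/-!
An irreducible set of eventual lower bounds whose supremum lies in a σ_I-set `U` must meet `U`,
so I-limits are σ_I-limits. Conversely, in an I-stable I-continuous space `≪_I` interpolates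
(`⋃ {↡_I b | b ≪_I y}` is irreducible with supremum `y`), which makes each `↟_I e` a σ_I-set;
a net σ_I-converging to `y` is thus eventually above every element of `↡_I y`, and `↡_I y`
witnesses I-convergence.
-/

open Filter TopologicalSpace

lemma eventually_mem_of_isOpen_generateFrom {α ι : Type*} [Preorder ι] [Nonempty ι]
    [IsDirectedOrder ι] {B : Set (Set α)} {x : ι → α} {y : α}
    (h : ∀ U ∈ B, y ∈ U → ∃ i₀, ∀ i, i₀ ≤ i → x i ∈ U)
    {V : Set α} (hV : (generateFrom B).IsOpen V) (hy : y ∈ V) :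
    ∃ i₀, ∀ i, i₀ ≤ i → x i ∈ V := by
  have hx : Tendsto x atTop (@nhds α (generateFrom B) y) :=
    tendsto_nhds_generateFrom_iff.2 fun U hU hyU => eventually_atTop.2 (h U hU hyU)
  exact eventually_atTop.1 (hx (@IsOpen.mem_nhds α (generateFrom B) _ _ hV hy))

section SpecialisationOrder

variable {X : Type u} [TopologicalSpace X]

lemma sle_iff_specializes {x y : X} : sle x y ↔ y ⤳ x :=
  specializes_iff_mem_closure.symm

lemma sle_refl (x : X) : sle x x :=
  subset_closure rfl

lemma sle.trans {a b c : X} (hab : sle a b) (hbc : sle b c) : sle a c :=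
  sle_iff_specializes.2 <| (sle_iff_specializes.1 hbc).trans (sle_iff_specializes.1 hab)

lemma IsOpen.mem_of_sle {U : Set X} (hU : IsOpen U) {a b : X} (ha : a ∈ U) (hab : sle a b) :
    b ∈ U :=
  (sle_iff_specializes.1 hab).mem_open hU ha

lemma sIsLUB_closure_singleton (z : X) : sIsLUB (closure ({z} : Set X)) z :=
  ⟨fun _ ha => ha, fun _ hu => hu z (subset_closure rfl)⟩

lemma sle_of_iBelow {e z : X} (h : IBelow e z) : sle e z := by
  obtain ⟨a, ha, hea⟩ := h _ isIrreducible_singleton.closure z (sIsLUB_closure_singleton z)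
    (sle_refl z)
  exact hea.trans ha

lemma sle.trans_iBelow {a b c : X} (hab : sle a b) (hbc : IBelow b c) : IBelow a c :=
  fun E hE s hs hcs => (hbc E hE s hs hcs).imp fun _ ⟨he, hbe⟩ => ⟨he, hab.trans hbe⟩

lemma IBelow.trans_sle {a b c : X} (hab : IBelow a b) (hbc : sle b c) : IBelow a c :=
  fun E hE s hs hcs => hab E hE s hs (hbc.trans hcs)

end SpecialisationOrder

section IContinuous

variable {X : Type u} [TopologicalSpace X]

lemma IBelow.iBelow_inter_nonempty (hcont : IContinuous X) {a b : X} (hab : IBelow a b)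
    {U : Set X} (hU : IsOpen U) (ha : a ∈ U) : ({c | IBelow c b} ∩ U).Nonempty := by
  obtain ⟨c, hcb, hac⟩ := hab _ (hcont b).1 b (hcont b).2 (sle_refl b)
  exact ⟨c, hcb, hU.mem_of_sle ha hac⟩

lemma isIrreducible_iBelow_iBelow (hstable : IStable X) (hcont : IContinuous X) (y : X) :
    IsIrreducible {a | ∃ b, IBelow a b ∧ IBelow b y} := by
  refine ⟨?_, ?_⟩
  · obtain ⟨b, hb⟩ := (hcont y).1.nonempty
    obtain ⟨a, ha⟩ := (hcont b).1.nonempty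
    exact ⟨a, b, ha, hb⟩
  rintro U V hU hV ⟨a₁, ⟨b₁, hab₁, hb₁⟩, ha₁⟩ ⟨a₂, ⟨b₂, hab₂, hb₂⟩, ha₂⟩
  -- `↡_I y` meets the open sets `↟_I U` and `↟_I V`, so it meets their intersection in some `b`;
  -- then `↡_I b` meets `U` and `V`, hence `U ∩ V`.
  obtain ⟨b, hby, ⟨a, haU, hab⟩, a', ha'V, ha'b⟩ := (hcont y).1.2 _ _ (hstable U hU)
    (hstable V hV) ⟨b₁, hb₁, a₁, ha₁, hab₁⟩ ⟨b₂, hb₂, a₂, ha₂, hab₂⟩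
  obtain ⟨c, hcb, hcU, hcV⟩ := (hcont b).1.2 U V hU hV (hab.iBelow_inter_nonempty hcont hU haU)
    (ha'b.iBelow_inter_nonempty hcont hV ha'V)
  exact ⟨c, ⟨b, hcb, hby⟩, hcU, hcV⟩

lemma sIsLUB_iBelow_iBelow (hcont : IContinuous X) (y : X) :
    sIsLUB {a | ∃ b, IBelow a b ∧ IBelow b y} y := by
  refine ⟨fun a ⟨b, hab, hby⟩ => (sle_of_iBelow hab).trans (sle_of_iBelow hby), fun u hu => ?_⟩
  exact (hcont y).2.2 u fun b hby => (hcont b).2.2 u fun a hab => hu a ⟨b, hab, hby⟩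

lemma IBelow.exists_interpolate (hstable : IStable X) (hcont : IContinuous X) {e y : X}
    (h : IBelow e y) : ∃ b, IBelow e b ∧ IBelow b y := by
  obtain ⟨a, ⟨b, hab, hby⟩, hea⟩ := h _ (isIrreducible_iBelow_iBelow hstable hcont y) y
    (sIsLUB_iBelow_iBelow hcont y) (sle_refl y)
  exact ⟨b, hea.trans_iBelow hab, hby⟩

lemma setOf_iBelow_mem_sigmaI (hstable : IStable X) (hcont : IContinuous X) (e : X) :
    {z | IBelow e z} ∈ sigmaI X := by
  refine ⟨fun a hea b hab => hea.trans_sle hab, fun E hE s hs hes => ?_⟩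
  obtain ⟨f, hef, hfs⟩ := hes.exists_interpolate hstable hcont
  obtain ⟨d, hdE, hfd⟩ := hfs E hE s hs (sle_refl s)
  exact ⟨d, hef.trans_sle hfd, hdE⟩

end IContinuous

section IConvergence

variable {X : Type u} [TopologicalSpace X] {ι : Type u} [Preorder ι] {x : ι → X} {y : X}

lemma IConv.eventually_mem_of_mem_sigmaI (h : IConv x y) {U : Set X} (hU : U ∈ sigmaI X)
    (hy : y ∈ U) : ∃ i₀, ∀ i, i₀ ≤ i → x i ∈ U := by
  obtain ⟨E, hE, hlb, s, hs, hys⟩ := h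
  obtain ⟨e, heU, heE⟩ := hU.2 E hE s hs (hU.1 y hy s hys)
  obtain ⟨i₀, hi₀⟩ := hlb e heE
  exact ⟨i₀, fun i hi => hU.1 e heU (x i) (hi₀ i hi)⟩

lemma iConv_of_eventually_mem_sigmaI (hstable : IStable X) (hcont : IContinuous X)
    (h : ∀ U ∈ sigmaI X, y ∈ U → ∃ i₀, ∀ i, i₀ ≤ i → x i ∈ U) : IConv x y := by
  refine ⟨{e | IBelow e y}, (hcont y).1, fun e hey => ?_, y, (hcont y).2, sle_refl y⟩
  obtain ⟨i₀, hi₀⟩ := h _ (setOf_iBelow_mem_sigmaI hstable hcont e) hey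
  exact ⟨i₀, fun i hi => sle_of_iBelow (hi₀ i hi)⟩

end IConvergence

theorem stmt17_general {X : Type u} [TopologicalSpace X]
    (hstable : IStable X) (hcont : IContinuous X)
    (ι : Type u) [Preorder ι] [Nonempty ι]
    (hdir : ∀ i j : ι, ∃ k : ι, i ≤ k ∧ j ≤ k)
    (x : ι → X) (y : X) :
    IConv x y ↔
      ∀ V : Set X, (TopologicalSpace.generateFrom (sigmaI X)).IsOpen V → y ∈ V →
        ∃ i₀ : ι, ∀ i : ι, i₀ ≤ i → x i ∈ V := by
  have : IsDirectedOrder ι := ⟨hdir⟩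
  exact ⟨fun h _ hV hy => eventually_mem_of_isOpen_generateFrom
      (fun _ hU => h.eventually_mem_of_mem_sigmaI hU) hV hy,
    fun h => iConv_of_eventually_mem_sigmaI hstable hcont fun U hU => h U (.basic U hU)⟩

/-- In an I-stable I-continuous T0 space, I-convergence is topological: it coincides with
convergence in the topology generated by σ_I. -/
theorem stmt17 {X : Type u} [TopologicalSpace X] [T0Space X]
    (hstable : IStable X) (hcont : IContinuous X)
    (ι : Type u) [Preorder ι] [Nonempty ι]
    (hdir : ∀ i j : ι, ∃ k : ι, i ≤ k ∧ j ≤ k)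
    (x : ι → X) (y : X) :
    IConv x y ↔
      ∀ V : Set X, (TopologicalSpace.generateFrom (sigmaI X)).IsOpen V → y ∈ V →
        ∃ i₀ : ι, ∀ i : ι, i₀ ≤ i → x i ∈ V :=
  stmt17_general hstable hcont ι hdir x y
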